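/- Let W₁ ⊆ ℙ¹ × ℙ^{n+1} × ℙ^{n+1} be the set of points ([t₀,t₁], [x], [y]) with t₀ = 0 satisfying x_i y_j = x_j y_i for 0 ≤ i,j ≤ n+1−h and x_k = 0 for n−h+2 ≤ k ≤ n+1, and let W₂ be defined analogously with x_i y_j = x_j y_i for n−h+2 ≤ i,j ≤ n+1 and y_k = 0 for 0 ≤ k ≤ n+1−h. Then every point of the zero set of the system { x_i y_j = x_j y_i (0 ≤ i,j ≤ n+1−h), x_i y_j = x_j y_i (n−h+2 ≤ i,j ≤ n+1), x_i y_j = 0 (0 ≤ j ≤ n+1−h, n−h+2 ≤ i ≤ n+1) } lies in W₁ ∪ W₂. -/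

import Mathlib

theorem stmt3_general (n h : ℕ)
    (x y : Fin (n + 2) → ℂ)
    (h1 : ∀ i j : Fin (n + 2), i.1 ≤ n + 1 - h → j.1 ≤ n + 1 - h → x i * y j = x j * y i)
    (h2 : ∀ i j : Fin (n + 2), n - h + 2 ≤ i.1 → n - h + 2 ≤ j.1 → x i * y j = x j * y i)
    (h3 : ∀ i j : Fin (n + 2), j.1 ≤ n + 1 - h → n - h + 2 ≤ i.1 → x i * y j = 0) :
    -- membership in W₁
    ((∀ i j : Fin (n + 2), i.1 ≤ n + 1 - h → j.1 ≤ n + 1 - h → x i * y j = x j * y i) ∧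
      (∀ k : Fin (n + 2), n - h + 2 ≤ k.1 → x k = 0)) ∨
    -- membership in W₂
    ((∀ i j : Fin (n + 2), n - h + 2 ≤ i.1 → n - h + 2 ≤ j.1 → x i * y j = x j * y i) ∧
      (∀ k : Fin (n + 2), k.1 ≤ n + 1 - h → y k = 0)) := by
  by_cases hx : ∀ k : Fin (n + 2), n - h + 2 ≤ k.1 → x k = 0
  · exact Or.inl ⟨h1, hx⟩
  · push Not at hx
    obtain ⟨k, hk, hxk⟩ := hx
    -- a single nonzero `x k` in the second block forces, via `h3`, the whole first block of `y` to vanish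
    exact Or.inr ⟨h2, fun j hj => (mul_eq_zero.mp (h3 k j hj hk)).resolve_left hxk⟩

/-- Every point of the zero set of the system defining `Ω^z_∞` lies in `W₁ ∪ W₂`.
Coordinates `x, y : Fin (n+2) → ℂ` are homogeneous coordinates on the two copies of
`ℙ^{n+1}`, written with indices `0,…,n+1`. -/
theorem stmt3 (n h : ℕ) (hn : 1 ≤ n) (hh : 1 ≤ h) (hhn : h ≤ n)
    (x y : Fin (n + 2) → ℂ) (hx : x ≠ 0) (hy : y ≠ 0)
    (h1 : ∀ i j : Fin (n + 2), i.1 ≤ n + 1 - h → j.1 ≤ n + 1 - h → x i * y j = x j * y i)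
    (h2 : ∀ i j : Fin (n + 2), n - h + 2 ≤ i.1 → n - h + 2 ≤ j.1 → x i * y j = x j * y i)
    (h3 : ∀ i j : Fin (n + 2), j.1 ≤ n + 1 - h → n - h + 2 ≤ i.1 → x i * y j = 0) :
    -- membership in W₁
    ((∀ i j : Fin (n + 2), i.1 ≤ n + 1 - h → j.1 ≤ n + 1 - h → x i * y j = x j * y i) ∧
      (∀ k : Fin (n + 2), n - h + 2 ≤ k.1 → x k = 0)) ∨
    -- membership in W₂
    ((∀ i j : Fin (n + 2), n - h + 2 ≤ i.1 → n - h + 2 ≤ j.1 → x i * y j = x j * y i) ∧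
      (∀ k : Fin (n + 2), k.1 ≤ n + 1 - h → y k = 0)) :=
  stmt3_general n h x y h1 h2 h3
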